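/- arXiv:2102.10019 — 3 statements merged into one kernel-verified Lean document; each statement's English description precedes it below -/
import Mathlib

section
/- (Theorem 1) Suppose 0 < μ_L < μ_H < 1 and predictive uncertainty holds. If TPR_L ≥ TPR_H, then at least one of the following holds: (i) P[G=L|ŷ=1] > P[G=L|Y=1] (L is over-represented among positive classifications), or (ii) NPV_L > NPV_H and PPV_L ≥ PPV_H (L's classifications are more informative). -/
open MeasureTheory

/-- Conditional probability `P[A | B]` as a real number. -/
noncomputable def condProb {Ω : Type*} [MeasurableSpace Ω] (P : Measure Ω) (A B : Set Ω) : ℝ :=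
  (P (A ∩ B)).toReal / (P B).toReal

lemma split_toReal {Ω : Type*} [MeasurableSpace Ω] (P : Measure Ω) [IsProbabilityMeasure P]
    (s t : Set Ω) (ht : MeasurableSet t) :
    (P s).toReal = (P (s ∩ t)).toReal + (P (s ∩ tᶜ)).toReal := by
  rw [← ENNReal.toReal_add (measure_ne_top P _) (measure_ne_top P _), ← Set.diff_eq,
    measure_inter_add_diff s ht]

lemma algebra_main (aL bL cL dL aH bH cH dH : ℝ)
    (haL : 0 < aL) (hbL : 0 < bL) (hcL : 0 < cL) (hdL : 0 < dL)
    (haH : 0 < aH) (hbH : 0 < bH) (hcH : 0 < cH) (hdH : 0 < dH)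
    (hTPR : aH / (aH + cH) ≤ aL / (aL + cL))
    (hμ : (aL + cL) / ((aL + cL) + (bL + dL)) < (aH + cH) / ((aH + cH) + (bH + dH))) :
    (aL + cL) / ((aL + cL) + (aH + cH)) < (aL + bL) / ((aL + bL) + (aH + bH)) ∨
    (dH / (cH + dH) < dL / (cL + dL) ∧ aH / (aH + bH) ≤ aL / (aL + bL)) := by
  rcases lt_or_ge ((aL + cL) * (aH + bH)) ((aL + bL) * (aH + cH)) with hc | hc
  · left
    rw [div_lt_div_iff₀ (by positivity) (by positivity)]
    nlinarith
  · right
    have E1 : aH * cL ≤ aL * cH := by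
      rw [div_le_div_iff₀ (by positivity) (by positivity)] at hTPR
      nlinarith
    have E4 : (aL + cL) * (bH + dH) < (aH + cH) * (bL + dL) := by
      rw [div_lt_div_iff₀ (by positivity) (by positivity)] at hμ
      nlinarith
    have E2 : bL * (aH + cH) ≤ bH * (aL + cL) := by nlinarith
    have key : (bL * dH) * (aH + cH) < (bH * dL) * (aH + cH) := by
      nlinarith [mul_le_mul_of_nonneg_right E2 (le_of_lt (add_pos hbH hdH)),
        mul_lt_mul_of_pos_left E4 hbH]
    have E3 : bL * dH < bH * dL := lt_of_mul_lt_mul_right key (by positivity)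
    constructor
    · have F1 : cL * (aH + cH) ≤ cH * (aL + cL) := by nlinarith
      have F3 : dH * (bL + dL) < dL * (bH + dH) := by nlinarith
      have s1 : (cL * (aH + cH)) * (dH * (bL + dL)) < (cH * (aL + cL)) * (dL * (bH + dH)) :=
        mul_lt_mul' F1 F3 (by positivity) (by positivity)
      have s2 : ((cL * (aH + cH)) * (dH * (bL + dL))) * ((aL + cL) * (bH + dH)) <
          ((cH * (aL + cL)) * (dL * (bH + dH))) * ((aH + cH) * (bL + dL)) :=
        mul_lt_mul'' s1 E4 (by positivity) (by positivity)
      have key2 : (cL * dH) * ((aH + cH) * (aL + cL) * (bL + dL) * (bH + dH)) <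
          (cH * dL) * ((aH + cH) * (aL + cL) * (bL + dL) * (bH + dH)) := by
        calc (cL * dH) * ((aH + cH) * (aL + cL) * (bL + dL) * (bH + dH))
            = ((cL * (aH + cH)) * (dH * (bL + dL))) * ((aL + cL) * (bH + dH)) := by ring
          _ < ((cH * (aL + cL)) * (dL * (bH + dH))) * ((aH + cH) * (bL + dL)) := s2
          _ = (cH * dL) * ((aH + cH) * (aL + cL) * (bL + dL) * (bH + dH)) := by ring
      have E5 : cL * dH < cH * dL := lt_of_mul_lt_mul_right key2 (by positivity)
      rw [div_lt_div_iff₀ (by positivity) (by positivity)]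
      nlinarith
    · have E1' : aH * (aL + cL) ≤ aL * (aH + cH) := by nlinarith
      have s3 : (bL * (aH + cH)) * (aH * (aL + cL)) ≤ (bH * (aL + cL)) * (aL * (aH + cH)) :=
        mul_le_mul E2 E1' (by positivity) (by positivity)
      have key3 : (bL * aH) * ((aH + cH) * (aL + cL)) ≤ (bH * aL) * ((aH + cH) * (aL + cL)) := by
        calc (bL * aH) * ((aH + cH) * (aL + cL))
            = (bL * (aH + cH)) * (aH * (aL + cL)) := by ring
          _ ≤ (bH * (aL + cL)) * (aL * (aH + cH)) := s3
          _ = (bH * aL) * ((aH + cH) * (aL + cL)) := by ring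
      have E6 : bL * aH ≤ bH * aL := le_of_mul_le_mul_right key3 (by positivity)
      rw [div_le_div_iff₀ (by positivity) (by positivity)]
      nlinarith

set_option maxHeartbeats 1000000 in
/-- Theorem 1: if TPR_L ≥ TPR_H then either L is over-represented among positive
classifications, or L's classifications are more informative (NPV_L > NPV_H and
PPV_L ≥ PPV_H). -/
theorem over_representation_or_more_informative
    {Ω : Type*} [MeasurableSpace Ω] (P : Measure Ω) [IsProbabilityMeasure P]
    (Y1 Yhat1 EL : Set Ω)
    (hY1 : MeasurableSet Y1) (hYhat1 : MeasurableSet Yhat1) (hEL : MeasurableSet EL)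
    (hELpos : P EL ≠ 0) (hEHpos : P ELᶜ ≠ 0)
    (hY1pos : P Y1 ≠ 0) (hY0pos : P Y1ᶜ ≠ 0)
    (hYhat1pos : P Yhat1 ≠ 0) (hYhat0pos : P Yhat1ᶜ ≠ 0)
    (hYGL : P (Y1 ∩ EL) ≠ 0) (hYGH : P (Y1 ∩ ELᶜ) ≠ 0)
    (hY0GL : P (Y1ᶜ ∩ EL) ≠ 0) (hY0GH : P (Y1ᶜ ∩ ELᶜ) ≠ 0)
    (hYhGL : P (Yhat1 ∩ EL) ≠ 0) (hYhGH : P (Yhat1 ∩ ELᶜ) ≠ 0)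
    (hYh0GL : P (Yhat1ᶜ ∩ EL) ≠ 0) (hYh0GH : P (Yhat1ᶜ ∩ ELᶜ) ≠ 0)
    (μL μH : ℝ)
    (hμL : μL = condProb P Y1 EL) (hμH : μH = condProb P Y1 ELᶜ)
    (h0 : 0 < μL) (h1 : μL < μH) (h2 : μH < 1)
    (TPRL TPRH FPRL FPRH : ℝ)
    (hTPRL : TPRL = condProb P Yhat1 (Y1 ∩ EL))
    (hTPRH : TPRH = condProb P Yhat1 (Y1 ∩ ELᶜ))
    (hFPRL : FPRL = condProb P Yhat1 (Y1ᶜ ∩ EL))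
    (hFPRH : FPRH = condProb P Yhat1 (Y1ᶜ ∩ ELᶜ))
    (hTPRL01 : TPRL ∈ Set.Ioo (0:ℝ) 1) (hTPRH01 : TPRH ∈ Set.Ioo (0:ℝ) 1)
    (hFPRL01 : FPRL ∈ Set.Ioo (0:ℝ) 1) (hFPRH01 : FPRH ∈ Set.Ioo (0:ℝ) 1)
    (PPVL PPVH NPVL NPVH : ℝ)
    (hPPVL : PPVL = condProb P Y1 (Yhat1 ∩ EL))
    (hPPVH : PPVH = condProb P Y1 (Yhat1 ∩ ELᶜ))
    (hNPVL : NPVL = condProb P Y1ᶜ (Yhat1ᶜ ∩ EL))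
    (hNPVH : NPVH = condProb P Y1ᶜ (Yhat1ᶜ ∩ ELᶜ))
    (hTPR : TPRL ≥ TPRH) :
    condProb P EL Yhat1 > condProb P EL Y1 ∨ (NPVL > NPVH ∧ PPVL ≥ PPVH) := by
  have mcongr : ∀ s t : Set Ω, s = t → (P s).toReal = (P t).toReal := fun s t h => by rw [h]
  set aL := (P (Yhat1 ∩ Y1 ∩ EL)).toReal with haL
  set bL := (P (Yhat1 ∩ Y1ᶜ ∩ EL)).toReal with hbL
  set cL := (P (Yhat1ᶜ ∩ Y1 ∩ EL)).toReal with hcL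
  set dL := (P (Yhat1ᶜ ∩ Y1ᶜ ∩ EL)).toReal with hdL
  set aH := (P (Yhat1 ∩ Y1 ∩ ELᶜ)).toReal with haH
  set bH := (P (Yhat1 ∩ Y1ᶜ ∩ ELᶜ)).toReal with hbH
  set cH := (P (Yhat1ᶜ ∩ Y1 ∩ ELᶜ)).toReal with hcH
  set dH := (P (Yhat1ᶜ ∩ Y1ᶜ ∩ ELᶜ)).toReal with hdH
  have PY1EL : (P (Y1 ∩ EL)).toReal = aL + cL := by
    rw [split_toReal P (Y1 ∩ EL) Yhat1 hYhat1,
      mcongr ((Y1 ∩ EL) ∩ Yhat1) (Yhat1 ∩ Y1 ∩ EL)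
        (by ext x; simp only [Set.mem_inter_iff, Set.mem_compl_iff]; tauto),
      mcongr ((Y1 ∩ EL) ∩ Yhat1ᶜ) (Yhat1ᶜ ∩ Y1 ∩ EL)
        (by ext x; simp only [Set.mem_inter_iff, Set.mem_compl_iff]; tauto)]
  have PY0EL : (P (Y1ᶜ ∩ EL)).toReal = bL + dL := by
    rw [split_toReal P (Y1ᶜ ∩ EL) Yhat1 hYhat1,
      mcongr ((Y1ᶜ ∩ EL) ∩ Yhat1) (Yhat1 ∩ Y1ᶜ ∩ EL)
        (by ext x; simp only [Set.mem_inter_iff, Set.mem_compl_iff]; tauto),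
      mcongr ((Y1ᶜ ∩ EL) ∩ Yhat1ᶜ) (Yhat1ᶜ ∩ Y1ᶜ ∩ EL)
        (by ext x; simp only [Set.mem_inter_iff, Set.mem_compl_iff]; tauto)]
  have PYh1EL : (P (Yhat1 ∩ EL)).toReal = aL + bL := by
    rw [split_toReal P (Yhat1 ∩ EL) Y1 hY1,
      mcongr ((Yhat1 ∩ EL) ∩ Y1) (Yhat1 ∩ Y1 ∩ EL)
        (by ext x; simp only [Set.mem_inter_iff, Set.mem_compl_iff]; tauto),
      mcongr ((Yhat1 ∩ EL) ∩ Y1ᶜ) (Yhat1 ∩ Y1ᶜ ∩ EL)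
        (by ext x; simp only [Set.mem_inter_iff, Set.mem_compl_iff]; tauto)]
  have PYh0EL : (P (Yhat1ᶜ ∩ EL)).toReal = cL + dL := by
    rw [split_toReal P (Yhat1ᶜ ∩ EL) Y1 hY1,
      mcongr ((Yhat1ᶜ ∩ EL) ∩ Y1) (Yhat1ᶜ ∩ Y1 ∩ EL)
        (by ext x; simp only [Set.mem_inter_iff, Set.mem_compl_iff]; tauto),
      mcongr ((Yhat1ᶜ ∩ EL) ∩ Y1ᶜ) (Yhat1ᶜ ∩ Y1ᶜ ∩ EL)
        (by ext x; simp only [Set.mem_inter_iff, Set.mem_compl_iff]; tauto)]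
  have PY1ELc : (P (Y1 ∩ ELᶜ)).toReal = aH + cH := by
    rw [split_toReal P (Y1 ∩ ELᶜ) Yhat1 hYhat1,
      mcongr ((Y1 ∩ ELᶜ) ∩ Yhat1) (Yhat1 ∩ Y1 ∩ ELᶜ)
        (by ext x; simp only [Set.mem_inter_iff, Set.mem_compl_iff]; tauto),
      mcongr ((Y1 ∩ ELᶜ) ∩ Yhat1ᶜ) (Yhat1ᶜ ∩ Y1 ∩ ELᶜ)
        (by ext x; simp only [Set.mem_inter_iff, Set.mem_compl_iff]; tauto)]
  have PY0ELc : (P (Y1ᶜ ∩ ELᶜ)).toReal = bH + dH := by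
    rw [split_toReal P (Y1ᶜ ∩ ELᶜ) Yhat1 hYhat1,
      mcongr ((Y1ᶜ ∩ ELᶜ) ∩ Yhat1) (Yhat1 ∩ Y1ᶜ ∩ ELᶜ)
        (by ext x; simp only [Set.mem_inter_iff, Set.mem_compl_iff]; tauto),
      mcongr ((Y1ᶜ ∩ ELᶜ) ∩ Yhat1ᶜ) (Yhat1ᶜ ∩ Y1ᶜ ∩ ELᶜ)
        (by ext x; simp only [Set.mem_inter_iff, Set.mem_compl_iff]; tauto)]
  have PYh1ELc : (P (Yhat1 ∩ ELᶜ)).toReal = aH + bH := by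
    rw [split_toReal P (Yhat1 ∩ ELᶜ) Y1 hY1,
      mcongr ((Yhat1 ∩ ELᶜ) ∩ Y1) (Yhat1 ∩ Y1 ∩ ELᶜ)
        (by ext x; simp only [Set.mem_inter_iff, Set.mem_compl_iff]; tauto),
      mcongr ((Yhat1 ∩ ELᶜ) ∩ Y1ᶜ) (Yhat1 ∩ Y1ᶜ ∩ ELᶜ)
        (by ext x; simp only [Set.mem_inter_iff, Set.mem_compl_iff]; tauto)]
  have PYh0ELc : (P (Yhat1ᶜ ∩ ELᶜ)).toReal = cH + dH := by
    rw [split_toReal P (Yhat1ᶜ ∩ ELᶜ) Y1 hY1,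
      mcongr ((Yhat1ᶜ ∩ ELᶜ) ∩ Y1) (Yhat1ᶜ ∩ Y1 ∩ ELᶜ)
        (by ext x; simp only [Set.mem_inter_iff, Set.mem_compl_iff]; tauto),
      mcongr ((Yhat1ᶜ ∩ ELᶜ) ∩ Y1ᶜ) (Yhat1ᶜ ∩ Y1ᶜ ∩ ELᶜ)
        (by ext x; simp only [Set.mem_inter_iff, Set.mem_compl_iff]; tauto)]
  have PEL : (P EL).toReal = (aL + cL) + (bL + dL) := by
    rw [split_toReal P EL Y1 hY1,
      mcongr (EL ∩ Y1) (Y1 ∩ EL) (Set.inter_comm _ _),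
      mcongr (EL ∩ Y1ᶜ) (Y1ᶜ ∩ EL) (Set.inter_comm _ _), PY1EL, PY0EL]
  have PELc : (P ELᶜ).toReal = (aH + cH) + (bH + dH) := by
    rw [split_toReal P ELᶜ Y1 hY1,
      mcongr (ELᶜ ∩ Y1) (Y1 ∩ ELᶜ) (Set.inter_comm _ _),
      mcongr (ELᶜ ∩ Y1ᶜ) (Y1ᶜ ∩ ELᶜ) (Set.inter_comm _ _), PY1ELc, PY0ELc]
  have PY1tot : (P Y1).toReal = (aL + cL) + (aH + cH) := by
    rw [split_toReal P Y1 EL hEL, PY1EL, PY1ELc]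
  have PYh1tot : (P Yhat1).toReal = (aL + bL) + (aH + bH) := by
    rw [split_toReal P Yhat1 EL hEL, PYh1EL, PYh1ELc]
  have PELY1 : (P (EL ∩ Y1)).toReal = aL + cL := by
    rw [mcongr (EL ∩ Y1) (Y1 ∩ EL) (Set.inter_comm _ _), PY1EL]
  have PELYh1 : (P (EL ∩ Yhat1)).toReal = aL + bL := by
    rw [mcongr (EL ∩ Yhat1) (Yhat1 ∩ EL) (Set.inter_comm _ _), PYh1EL]
  -- numerators
  have nTPRL : (P (Yhat1 ∩ (Y1 ∩ EL))).toReal = aL :=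
    mcongr _ _ (Set.inter_assoc _ _ _).symm
  have nTPRH : (P (Yhat1 ∩ (Y1 ∩ ELᶜ))).toReal = aH :=
    mcongr _ _ (Set.inter_assoc _ _ _).symm
  have nFPRL : (P (Yhat1 ∩ (Y1ᶜ ∩ EL))).toReal = bL :=
    mcongr _ _ (Set.inter_assoc _ _ _).symm
  have nFPRH : (P (Yhat1 ∩ (Y1ᶜ ∩ ELᶜ))).toReal = bH :=
    mcongr _ _ (Set.inter_assoc _ _ _).symm
  have nPPVL : (P (Y1 ∩ (Yhat1 ∩ EL))).toReal = aL :=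
    mcongr _ _ (by ext x; simp only [Set.mem_inter_iff, Set.mem_compl_iff]; tauto)
  have nPPVH : (P (Y1 ∩ (Yhat1 ∩ ELᶜ))).toReal = aH :=
    mcongr _ _ (by ext x; simp only [Set.mem_inter_iff, Set.mem_compl_iff]; tauto)
  have nNPVL : (P (Y1ᶜ ∩ (Yhat1ᶜ ∩ EL))).toReal = dL :=
    mcongr _ _ (by ext x; simp only [Set.mem_inter_iff, Set.mem_compl_iff]; tauto)
  have nNPVH : (P (Y1ᶜ ∩ (Yhat1ᶜ ∩ ELᶜ))).toReal = dH :=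
    mcongr _ _ (by ext x; simp only [Set.mem_inter_iff, Set.mem_compl_iff]; tauto)
  -- positivity of denominators
  have pACL : 0 < aL + cL := by
    rw [← PY1EL]; exact ENNReal.toReal_pos hYGL (measure_ne_top P _)
  have pBDL : 0 < bL + dL := by
    rw [← PY0EL]; exact ENNReal.toReal_pos hY0GL (measure_ne_top P _)
  have pACH : 0 < aH + cH := by
    rw [← PY1ELc]; exact ENNReal.toReal_pos hYGH (measure_ne_top P _)
  have pBDH : 0 < bH + dH := by
    rw [← PY0ELc]; exact ENNReal.toReal_pos hY0GH (measure_ne_top P _)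
  -- positivity of the eight cells
  have haL0 : 0 < aL := by
    have h := hTPRL01.1
    rw [hTPRL] at h; simp only [condProb] at h; rw [nTPRL, PY1EL] at h
    have h2 := mul_pos h pACL
    rwa [div_mul_cancel₀ _ (ne_of_gt pACL)] at h2
  have hcL0 : 0 < cL := by
    have h := hTPRL01.2
    rw [hTPRL] at h; simp only [condProb] at h; rw [nTPRL, PY1EL] at h
    have h2 := (div_lt_one pACL).mp h
    linarith
  have haH0 : 0 < aH := by
    have h := hTPRH01.1
    rw [hTPRH] at h; simp only [condProb] at h; rw [nTPRH, PY1ELc] at h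
    have h2 := mul_pos h pACH
    rwa [div_mul_cancel₀ _ (ne_of_gt pACH)] at h2
  have hcH0 : 0 < cH := by
    have h := hTPRH01.2
    rw [hTPRH] at h; simp only [condProb] at h; rw [nTPRH, PY1ELc] at h
    have h2 := (div_lt_one pACH).mp h
    linarith
  have hbL0 : 0 < bL := by
    have h := hFPRL01.1
    rw [hFPRL] at h; simp only [condProb] at h; rw [nFPRL, PY0EL] at h
    have h2 := mul_pos h pBDL
    rwa [div_mul_cancel₀ _ (ne_of_gt pBDL)] at h2
  have hdL0 : 0 < dL := by
    have h := hFPRL01.2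
    rw [hFPRL] at h; simp only [condProb] at h; rw [nFPRL, PY0EL] at h
    have h2 := (div_lt_one pBDL).mp h
    linarith
  have hbH0 : 0 < bH := by
    have h := hFPRH01.1
    rw [hFPRH] at h; simp only [condProb] at h; rw [nFPRH, PY0ELc] at h
    have h2 := mul_pos h pBDH
    rwa [div_mul_cancel₀ _ (ne_of_gt pBDH)] at h2
  have hdH0 : 0 < dH := by
    have h := hFPRH01.2
    rw [hFPRH] at h; simp only [condProb] at h; rw [nFPRH, PY0ELc] at h
    have h2 := (div_lt_one pBDH).mp h
    linarith
  -- rewrite hypotheses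
  rw [hTPRL, hTPRH] at hTPR
  simp only [condProb] at hTPR
  rw [nTPRL, PY1EL, nTPRH, PY1ELc] at hTPR
  rw [hμL, hμH] at h1
  simp only [condProb] at h1
  rw [PY1EL, PEL, PY1ELc, PELc] at h1
  -- rewrite goal
  rw [hNPVL, hNPVH, hPPVL, hPPVH]
  simp only [condProb]
  rw [nNPVL, PYh0EL, nNPVH, PYh0ELc, nPPVL, PYh1EL, nPPVH, PYh1ELc,
    PELYh1, PYh1tot, PELY1, PY1tot]
  exact algebra_main aL bL cL dL aH bH cH dH haL0 hbL0 hcL0 hdL0 haH0 hbH0 hcH0 hdH0 hTPR h1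
end

section
/- Under the setup of Theorem 1, if PPV_L < PPV_H and TPR_L ≥ TPR_H, then L is over-represented among positive classifications: P[G=L|ŷ=1] > P[G=L|Y=1]. -/
/-! `P[L | ŷ = 1] > P[L | Y = 1]` is equivalent to
`P(Y = 1, L) · P(ŷ = 1, H) < P(ŷ = 1, L) · P(Y = 1, H)`. Both sides are linked to the rates through
`TPR_G · P(Y = 1, G) = P(ŷ = 1, Y = 1, G) = PPV_G · P(ŷ = 1, G)`, and after multiplying by
`TPR_L · TPR_H` the comparison becomes `PPV_L · TPR_H < PPV_H · TPR_L`, which is immediate from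
`PPV_L < PPV_H` and `TPR_H ≤ TPR_L`. -/

open MeasureTheory

theorem mul_lt_mul_of_ppv_lt_of_tpr_le {a b x y pL pH rL rH : ℝ}
    (hb : 0 ≤ b) (hx : 0 < x) (hy : 0 < y) (hpL : 0 ≤ pL) (hp : pL < pH) (hr : rH ≤ rL)
    (hL : rL * a = pL * x) (hH : rH * b = pH * y) : a * y < x * b := by
  have hrH : 0 < rH := pos_of_mul_pos_left (hH ▸ mul_pos (hpL.trans_lt hp) hy) hb
  have hrL : 0 < rL := hrH.trans_le hr
  have hxy : 0 < x * y := mul_pos hx hy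
  have hcross : pL * rH < pH * rL := calc
    pL * rH ≤ pL * rL := mul_le_mul_of_nonneg_left hr hpL
    _ < pH * rL := mul_lt_mul_of_pos_right hp hrL
  refine lt_of_mul_lt_mul_right (a := rL * rH) ?_ (mul_pos hrL hrH).le
  calc a * y * (rL * rH) = pL * rH * (x * y) := by linear_combination y * rH * hL
    _ < pH * rL * (x * y) := mul_lt_mul_of_pos_right hcross hxy
    _ = x * b * (rL * rH) := by linear_combination -x * rL * hH

theorem div_add_lt_div_add_of_mul_lt {a b x y : ℝ} (ha : 0 ≤ a) (hx : 0 < x) (hy : 0 ≤ y)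
    (h : a * y < x * b) : a / (a + b) < x / (x + y) := by
  have hb : 0 < b := pos_of_mul_pos_right ((mul_nonneg ha hy).trans_lt h) hx.le
  rw [div_lt_div_iff₀ (by positivity) (by positivity)]
  linarith

section condProb

variable {Ω : Type*} [MeasurableSpace Ω] (P : Measure Ω)

theorem condProb_nonneg (A B : Set Ω) : 0 ≤ condProb P A B := by
  unfold condProb
  positivity

variable [IsFiniteMeasure P]

theorem condProb_mul_toReal (A B : Set Ω) :
    condProb P A B * (P B).toReal = (P (A ∩ B)).toReal := by
  by_cases hB : P B = 0
  · simp [hB, measure_mono_null Set.inter_subset_right hB]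
  · exact div_mul_cancel₀ _ (ENNReal.toReal_ne_zero.mpr ⟨hB, measure_ne_top P B⟩)

theorem condProb_mul_toReal_inter_comm (A B C : Set Ω) :
    condProb P A (B ∩ C) * (P (B ∩ C)).toReal = condProb P B (A ∩ C) * (P (A ∩ C)).toReal := by
  rw [condProb_mul_toReal, condProb_mul_toReal, Set.inter_left_comm]

theorem condProb_eq_div_add {E : Set Ω} (hE : MeasurableSet E) (A : Set Ω) :
    condProb P E A =
      (P (A ∩ E)).toReal / ((P (A ∩ E)).toReal + (P (A ∩ Eᶜ)).toReal) := by
  rw [condProb, Set.inter_comm E A, ← Set.sdiff_eq]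
  congr
  exact (measureReal_inter_add_sdiff hE).symm

end condProb

theorem over_representation_of_lower_ppv_general
    {Ω : Type*} [MeasurableSpace Ω] (P : Measure Ω) [IsProbabilityMeasure P]
    (Y1 Yhat1 EL : Set Ω)
    (hEL : MeasurableSet EL)
    (hYhGL : P (Yhat1 ∩ EL) ≠ 0) (hYhGH : P (Yhat1 ∩ ELᶜ) ≠ 0)
    (TPRL TPRH : ℝ)
    (hTPRL : TPRL = condProb P Yhat1 (Y1 ∩ EL))
    (hTPRH : TPRH = condProb P Yhat1 (Y1 ∩ ELᶜ))
    (PPVL PPVH : ℝ)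
    (hPPVL : PPVL = condProb P Y1 (Yhat1 ∩ EL))
    (hPPVH : PPVH = condProb P Y1 (Yhat1 ∩ ELᶜ))
    (hPPV : PPVL < PPVH) (hTPR : TPRL ≥ TPRH) :
    condProb P EL Yhat1 > condProb P EL Y1 := by
  have hx := ENNReal.toReal_pos hYhGL (measure_ne_top P _)
  have hy := ENNReal.toReal_pos hYhGH (measure_ne_top P _)
  have hL : TPRL * (P (Y1 ∩ EL)).toReal = PPVL * (P (Yhat1 ∩ EL)).toReal := by
    rw [hTPRL, hPPVL, condProb_mul_toReal_inter_comm]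
  have hH : TPRH * (P (Y1 ∩ ELᶜ)).toReal = PPVH * (P (Yhat1 ∩ ELᶜ)).toReal := by
    rw [hTPRH, hPPVH, condProb_mul_toReal_inter_comm]
  have key := mul_lt_mul_of_ppv_lt_of_tpr_le ENNReal.toReal_nonneg hx hy
    (hPPVL ▸ condProb_nonneg P _ _) hPPV hTPR hL hH
  rw [gt_iff_lt, condProb_eq_div_add P hEL, condProb_eq_div_add P hEL]
  exact div_add_lt_div_add_of_mul_lt ENNReal.toReal_nonneg hx hy.le key

/-- If PPV_L < PPV_H and TPR_L ≥ TPR_H then L is over-represented among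
positive classifications. -/
theorem over_representation_of_lower_ppv
    {Ω : Type*} [MeasurableSpace Ω] (P : Measure Ω) [IsProbabilityMeasure P]
    (Y1 Yhat1 EL : Set Ω)
    (hY1 : MeasurableSet Y1) (hYhat1 : MeasurableSet Yhat1) (hEL : MeasurableSet EL)
    (hELpos : P EL ≠ 0) (hEHpos : P ELᶜ ≠ 0)
    (hY1pos : P Y1 ≠ 0) (hY0pos : P Y1ᶜ ≠ 0)
    (hYhat1pos : P Yhat1 ≠ 0) (hYhat0pos : P Yhat1ᶜ ≠ 0)
    (hYGL : P (Y1 ∩ EL) ≠ 0) (hYGH : P (Y1 ∩ ELᶜ) ≠ 0)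
    (hY0GL : P (Y1ᶜ ∩ EL) ≠ 0) (hY0GH : P (Y1ᶜ ∩ ELᶜ) ≠ 0)
    (hYhGL : P (Yhat1 ∩ EL) ≠ 0) (hYhGH : P (Yhat1 ∩ ELᶜ) ≠ 0)
    (hYh0GL : P (Yhat1ᶜ ∩ EL) ≠ 0) (hYh0GH : P (Yhat1ᶜ ∩ ELᶜ) ≠ 0)
    (μL μH : ℝ)
    (hμL : μL = condProb P Y1 EL) (hμH : μH = condProb P Y1 ELᶜ)
    (h0 : 0 < μL) (h1 : μL < μH) (h2 : μH < 1)
    (TPRL TPRH FPRL FPRH : ℝ)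
    (hTPRL : TPRL = condProb P Yhat1 (Y1 ∩ EL))
    (hTPRH : TPRH = condProb P Yhat1 (Y1 ∩ ELᶜ))
    (hFPRL : FPRL = condProb P Yhat1 (Y1ᶜ ∩ EL))
    (hFPRH : FPRH = condProb P Yhat1 (Y1ᶜ ∩ ELᶜ))
    (hTPRL01 : TPRL ∈ Set.Ioo (0:ℝ) 1) (hTPRH01 : TPRH ∈ Set.Ioo (0:ℝ) 1)
    (hFPRL01 : FPRL ∈ Set.Ioo (0:ℝ) 1) (hFPRH01 : FPRH ∈ Set.Ioo (0:ℝ) 1)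
    (PPVL PPVH NPVL NPVH : ℝ)
    (hPPVL : PPVL = condProb P Y1 (Yhat1 ∩ EL))
    (hPPVH : PPVH = condProb P Y1 (Yhat1 ∩ ELᶜ))
    (hNPVL : NPVL = condProb P Y1ᶜ (Yhat1ᶜ ∩ EL))
    (hNPVH : NPVH = condProb P Y1ᶜ (Yhat1ᶜ ∩ ELᶜ))
    (hPPV : PPVL < PPVH) (hTPR : TPRL ≥ TPRH) :
    condProb P EL Yhat1 > condProb P EL Y1 :=
  over_representation_of_lower_ppv_general P Y1 Yhat1 EL hEL hYhGL hYhGH TPRL TPRH hTPRL hTPRH PPVL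
    PPVH hPPVL hPPVH hPPV hTPR
end

section
/- Under the setup of Theorem 1, if NPV_L ≤ NPV_H and TPR_L ≥ TPR_H (equivalently FNR_L ≤ FNR_H), then μ̂_L > μ̂_H, and consequently L is over-represented among positive classifications: P[G=L|ŷ=1] > P[G=L|Y=1]. -/
open MeasureTheory

lemma toReal_split {Ω : Type*} [MeasurableSpace Ω] (P : Measure Ω) [IsFiniteMeasure P]
    {s : Set Ω} (hs : MeasurableSet s) (t : Set Ω) :
    (P (s ∩ t)).toReal + (P (sᶜ ∩ t)).toReal = (P t).toReal := by
  rw [← ENNReal.toReal_add (measure_ne_top _ _) (measure_ne_top _ _)]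
  congr 1
  rw [Set.inter_comm s t, Set.inter_comm sᶜ t, ← Set.diff_eq, measure_inter_add_diff t hs]

set_option maxHeartbeats 1600000 in
/-- If NPV_L ≤ NPV_H and TPR_L ≥ TPR_H then μ̂_L > μ̂_H and L is over-represented
among positive classifications. -/
theorem over_representation_of_lower_npv
    {Ω : Type*} [MeasurableSpace Ω] (P : Measure Ω) [IsProbabilityMeasure P]
    (Y1 Yhat1 EL : Set Ω)
    (hY1 : MeasurableSet Y1) (hYhat1 : MeasurableSet Yhat1) (hEL : MeasurableSet EL)
    (hELpos : P EL ≠ 0) (hEHpos : P ELᶜ ≠ 0)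
    (hY1pos : P Y1 ≠ 0) (hY0pos : P Y1ᶜ ≠ 0)
    (hYhat1pos : P Yhat1 ≠ 0) (hYhat0pos : P Yhat1ᶜ ≠ 0)
    (hYGL : P (Y1 ∩ EL) ≠ 0) (hYGH : P (Y1 ∩ ELᶜ) ≠ 0)
    (hY0GL : P (Y1ᶜ ∩ EL) ≠ 0) (hY0GH : P (Y1ᶜ ∩ ELᶜ) ≠ 0)
    (hYhGL : P (Yhat1 ∩ EL) ≠ 0) (hYhGH : P (Yhat1 ∩ ELᶜ) ≠ 0)
    (hYh0GL : P (Yhat1ᶜ ∩ EL) ≠ 0) (hYh0GH : P (Yhat1ᶜ ∩ ELᶜ) ≠ 0)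
    (μL μH : ℝ)
    (hμL : μL = condProb P Y1 EL) (hμH : μH = condProb P Y1 ELᶜ)
    (h0 : 0 < μL) (h1 : μL < μH) (h2 : μH < 1)
    (TPRL TPRH FPRL FPRH : ℝ)
    (hTPRL : TPRL = condProb P Yhat1 (Y1 ∩ EL))
    (hTPRH : TPRH = condProb P Yhat1 (Y1 ∩ ELᶜ))
    (hFPRL : FPRL = condProb P Yhat1 (Y1ᶜ ∩ EL))
    (hFPRH : FPRH = condProb P Yhat1 (Y1ᶜ ∩ ELᶜ))
    (hTPRL01 : TPRL ∈ Set.Ioo (0:ℝ) 1) (hTPRH01 : TPRH ∈ Set.Ioo (0:ℝ) 1)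
    (hFPRL01 : FPRL ∈ Set.Ioo (0:ℝ) 1) (hFPRH01 : FPRH ∈ Set.Ioo (0:ℝ) 1)
    (PPVL PPVH NPVL NPVH : ℝ)
    (hPPVL : PPVL = condProb P Y1 (Yhat1 ∩ EL))
    (hPPVH : PPVH = condProb P Y1 (Yhat1 ∩ ELᶜ))
    (hNPVL : NPVL = condProb P Y1ᶜ (Yhat1ᶜ ∩ EL))
    (hNPVH : NPVH = condProb P Y1ᶜ (Yhat1ᶜ ∩ ELᶜ))
    (hNPV : NPVL ≤ NPVH) (hTPR : TPRL ≥ TPRH) :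
    condProb P Yhat1 EL > condProb P Yhat1 ELᶜ ∧
      condProb P EL Yhat1 > condProb P EL Y1 := by
  have hpos : ∀ {A : Set Ω}, P A ≠ 0 → 0 < (P A).toReal :=
    fun h => ENNReal.toReal_pos h (measure_ne_top _ _)
  simp only [condProb] at hμL hμH hTPRL hTPRH hNPVL hNPVH ⊢
  rw [Set.inter_comm EL Yhat1, Set.inter_comm EL Y1]
  set pL := (P EL).toReal with hpLdef
  set pH := (P ELᶜ).toReal with hpHdef
  set yL := (P (Y1 ∩ EL)).toReal with hyLdef
  set yH := (P (Y1 ∩ ELᶜ)).toReal with hyHdef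
  set hatL := (P (Yhat1 ∩ EL)).toReal with hhatLdef
  set hatH := (P (Yhat1 ∩ ELᶜ)).toReal with hhatHdef
  set nL := (P (Yhat1ᶜ ∩ EL)).toReal with hnLdef
  set nH := (P (Yhat1ᶜ ∩ ELᶜ)).toReal with hnHdef
  set tpL := (P (Yhat1 ∩ (Y1 ∩ EL))).toReal with htpLdef
  set tpH := (P (Yhat1 ∩ (Y1 ∩ ELᶜ))).toReal with htpHdef
  set fnL := (P (Yhat1ᶜ ∩ (Y1 ∩ EL))).toReal with hfnLdef
  set fnH := (P (Yhat1ᶜ ∩ (Y1 ∩ ELᶜ))).toReal with hfnHdef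
  set tnL := (P (Y1ᶜ ∩ (Yhat1ᶜ ∩ EL))).toReal with htnLdef
  set tnH := (P (Y1ᶜ ∩ (Yhat1ᶜ ∩ ELᶜ))).toReal with htnHdef
  -- positivity
  have ppL : 0 < pL := hpos hELpos
  have ppH : 0 < pH := hpos hEHpos
  have pyL : 0 < yL := hpos hYGL
  have pyH : 0 < yH := hpos hYGH
  have phatL : 0 < hatL := hpos hYhGL
  have phatH : 0 < hatH := hpos hYhGH
  have pnL : 0 < nL := hpos hYh0GL
  have pnH : 0 < nH := hpos hYh0GH
  have pY : 0 < (P Y1).toReal := hpos hY1pos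
  have pYh : 0 < (P Yhat1).toReal := hpos hYhat1pos
  -- splits
  have s1L : tpL + fnL = yL := toReal_split P hYhat1 (Y1 ∩ EL)
  have s1H : tpH + fnH = yH := toReal_split P hYhat1 (Y1 ∩ ELᶜ)
  have eL : Y1 ∩ (Yhat1ᶜ ∩ EL) = Yhat1ᶜ ∩ (Y1 ∩ EL) := by
    ext x; simp only [Set.mem_inter_iff]; tauto
  have eH : Y1 ∩ (Yhat1ᶜ ∩ ELᶜ) = Yhat1ᶜ ∩ (Y1 ∩ ELᶜ) := by
    ext x; simp only [Set.mem_inter_iff]; tauto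
  have s2L : fnL + tnL = nL := by
    have := toReal_split P hY1 (Yhat1ᶜ ∩ EL); rwa [eL] at this
  have s2H : fnH + tnH = nH := by
    have := toReal_split P hY1 (Yhat1ᶜ ∩ ELᶜ); rwa [eH] at this
  have s3L : hatL + nL = pL := toReal_split P hYhat1 EL
  have s3H : hatH + nH = pH := toReal_split P hYhat1 ELᶜ
  have sY : yL + yH = (P Y1).toReal := by
    have := toReal_split P hEL Y1
    rwa [Set.inter_comm EL Y1, Set.inter_comm ELᶜ Y1] at this
  have sYh : hatL + hatH = (P Yhat1).toReal := by
    have := toReal_split P hEL Yhat1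
    rwa [Set.inter_comm EL Yhat1, Set.inter_comm ELᶜ Yhat1] at this
  -- basic equations
  have hyL : yL = μL * pL := (div_eq_iff ppL.ne').mp hμL.symm
  have hyH : yH = μH * pH := (div_eq_iff ppH.ne').mp hμH.symm
  have htpL : tpL = TPRL * yL := (div_eq_iff pyL.ne').mp hTPRL.symm
  have htpH : tpH = TPRH * yH := (div_eq_iff pyH.ne').mp hTPRH.symm
  have htnL : tnL = NPVL * nL := (div_eq_iff pnL.ne').mp hNPVL.symm
  have htnH : tnH = NPVH * nH := (div_eq_iff pnH.ne').mp hNPVH.symm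
  have hfnL1 : fnL = (1 - TPRL) * yL := by linear_combination s1L - htpL
  have hfnH1 : fnH = (1 - TPRH) * yH := by linear_combination s1H - htpH
  have hfnL2 : fnL = (1 - NPVL) * nL := by linear_combination s2L - htnL
  have hfnH2 : fnH = (1 - NPVH) * nH := by linear_combination s2H - htnH
  have pa : 0 < 1 - TPRL := sub_pos.mpr hTPRL01.2
  have pa' : 0 < 1 - TPRH := sub_pos.mpr hTPRH01.2
  have pfnL : 0 < fnL := by rw [hfnL1]; exact mul_pos pa pyL
  have pfnH : 0 < fnH := by rw [hfnH1]; exact mul_pos pa' pyH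
  have pcL : 0 < 1 - NPVL := by
    have h := pfnL; rw [hfnL2] at h
    rcases mul_pos_iff.mp h with ⟨h1', _⟩ | ⟨_, h2'⟩
    · exact h1'
    · linarith only [pnL, h2']
  have pcH : 0 < 1 - NPVH := by
    have h := pfnH; rw [hfnH2] at h
    rcases mul_pos_iff.mp h with ⟨h1', _⟩ | ⟨_, h2'⟩
    · exact h1'
    · linarith only [pnH, h2']
  -- key inequality
  have key : (1 - TPRL) * μL * (1 - NPVH) < (1 - TPRH) * μH * (1 - NPVL) := by
    have k1 : (1 - TPRL) * μL * (1 - NPVH) ≤ (1 - TPRH) * μL * (1 - NPVH) :=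
      mul_le_mul_of_nonneg_right
        (mul_le_mul_of_nonneg_right (by linarith only [hTPR]) h0.le) pcH.le
    have k2 : (1 - TPRH) * μL * (1 - NPVH) < (1 - TPRH) * μH * (1 - NPVH) :=
      mul_lt_mul_of_pos_right (mul_lt_mul_of_pos_left h1 pa') pcH
    have k3 : (1 - TPRH) * μH * (1 - NPVH) ≤ (1 - TPRH) * μH * (1 - NPVL) :=
      mul_le_mul_of_nonneg_left (by linarith only [hNPV]) (mul_pos pa' (h0.trans h1)).le
    linarith only [k1, k2, k3]
  have qL : (1 - NPVL) * nL = (1 - TPRL) * μL * pL := by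
    rw [← hfnL2, hfnL1, hyL]; ring
  have qH : (1 - NPVH) * nH = (1 - TPRH) * μH * pH := by
    rw [← hfnH2, hfnH1, hyH]; ring
  have hnLv : nL = (1 - TPRL) * μL * pL / (1 - NPVL) := by
    rw [eq_div_iff pcL.ne']; linear_combination qL
  have hnHv : nH = (1 - TPRH) * μH * pH / (1 - NPVH) := by
    rw [eq_div_iff pcH.ne']; linear_combination qH
  have hn : nL * pH < nH * pL := by
    rw [hnLv, hnHv, div_mul_eq_mul_div, div_mul_eq_mul_div, div_lt_div_iff₀ pcL pcH]
    calc (1 - TPRL) * μL * pL * pH * (1 - NPVH)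
        = ((1 - TPRL) * μL * (1 - NPVH)) * (pL * pH) := by ring
      _ < ((1 - TPRH) * μH * (1 - NPVL)) * (pL * pH) :=
          mul_lt_mul_of_pos_right key (mul_pos ppL ppH)
      _ = (1 - TPRH) * μH * pH * pL * (1 - NPVL) := by ring
  have goal1 : hatH * pL < hatL * pH := by
    have hhL : hatL = pL - nL := by linarith only [s3L]
    have hhH : hatH = pH - nH := by linarith only [s3H]
    rw [hhL, hhH]; linarith only [hn]
  constructor
  · rw [gt_iff_lt, div_lt_div_iff₀ ppH ppL]; exact goal1
  · rw [gt_iff_lt, div_lt_div_iff₀ pY pYh, ← sY, ← sYh]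
    have t1 : μL * (hatH * pL) < μL * (hatL * pH) := mul_lt_mul_of_pos_left goal1 h0
    have t2 : μL * (hatL * pH) < μH * (hatL * pH) :=
      mul_lt_mul_of_pos_right h1 (mul_pos phatL ppH)
    have hkey2 : yL * hatH < hatL * yH := by rw [hyL, hyH]; linarith only [t1, t2]
    linarith only [hkey2]
end
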